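/- arXiv:2209.15375 — 2 statements merged into one kernel-verified Lean document; each statement's English description precedes it below -/
import Mathlib

section
/- Let p = 2, let V be a finite-dimensional 𝔽₂-vector space, and let a, x ∈ GL(V) with a of odd prime order q, x of order 2, and x a x⁻¹ = a⁻¹ (so ⟨a,x⟩ ≅ D_{2q}). Assume 2 is a primitive root modulo q (i.e. 2 has multiplicative order q−1 in 𝔽_q^×). Then dim(C_V(x) ∩ [x,V]) ≥ (1/2)·dim(V/C_V(a)). -/
open Module

/-- Let `V` be a finite-dimensional `𝔽₂`-vector space and
`a, x ∈ GL(V)` with `a` of odd prime order `q`, `x` of order 2, and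
`x a x⁻¹ = a⁻¹` (so `⟨a,x⟩ ≅ D_{2q}`).  If 2 is a primitive root modulo `q`, then
`dim(C_V(x) ∩ [x,V]) ≥ (1/2)·dim(V / C_V(a))`. -/
theorem jordan_blocks_ge_of_dihedral_action
    (q : ℕ) (hq : q.Prime) (hq2 : q ≠ 2)
    (hprim : orderOf (2 : ZMod q) = q - 1)
    (V : Type*) [AddCommGroup V] [Module (ZMod 2) V] [FiniteDimensional (ZMod 2) V]
    (a x : V ≃ₗ[ZMod 2] V) (ha : orderOf a = q) (hx : orderOf x = 2)
    (hconj : x * a * x⁻¹ = a⁻¹) :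
    2 * finrank (ZMod 2)
        ↥(LinearMap.ker ((x : V →ₗ[ZMod 2] V) - LinearMap.id) ⊓
          LinearMap.range ((x : V →ₗ[ZMod 2] V) - LinearMap.id))
      ≥ finrank (ZMod 2)
          (V ⧸ LinearMap.ker ((a : V →ₗ[ZMod 2] V) - LinearMap.id)) := by
  set f : V →ₗ[ZMod 2] V := (x : V →ₗ[ZMod 2] V) - LinearMap.id with hfdef
  set g : V →ₗ[ZMod 2] V := (a : V →ₗ[ZMod 2] V) - LinearMap.id with hgdef
  have hqodd : q % 2 = 1 := Nat.odd_iff.1 (hq.odd_of_ne_two hq2)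
  have hf : ∀ u : V, f u = x u - u := fun u => rfl
  have hg : ∀ u : V, g u = a u - u := fun u => rfl
  -- char 2 facts
  have hchar : ∀ v : V, v + v = 0 := by
    intro v
    have h1 : ((1 : ZMod 2) + 1) • v = v + v := by rw [add_smul, one_smul]
    have h0 : ((1 : ZMod 2) + 1) = 0 := by decide
    rw [← h1, h0, zero_smul]
  have hneg : ∀ v : V, -v = v := fun v => neg_eq_of_add_eq_zero_left (hchar v)
  have hss : ∀ s t : V, s - t = t - s := by
    intro s t; rw [← hneg (t - s), neg_sub]
  -- x has order 2
  have hx2 : x ^ 2 = 1 := by have := pow_orderOf_eq_one x; rwa [hx] at this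
  have hx1 : ∀ v : V, x (x v) = v := by
    intro v
    have : (x ^ 2) v = v := by rw [hx2]; rfl
    rwa [pow_two] at this
  have hxinv : x⁻¹ = x := inv_eq_of_mul_eq_one_right (by rw [← pow_two]; exact hx2)
  -- conjugation relation pointwise
  have hxa : ∀ v : V, x (a v) = a⁻¹ (x v) := by
    intro v
    have hkey : x * a = a⁻¹ * x := by
      have h := hconj
      rw [hxinv] at h
      rw [← h, mul_assoc, mul_assoc, ← pow_two, hx2, mul_one]
    have : (x * a) v = (a⁻¹ * x) v := by rw [hkey]
    exact this
  have haainv : ∀ v : V, a (a⁻¹ v) = v := by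
    intro v; have : (a * a⁻¹) v = v := by rw [mul_inv_cancel]; rfl
    exact this
  -- equiv powers pointwise
  have haq : ∀ v : V, (⇑a)^[q] v = v := by
    intro v
    have h1 : a ^ q = 1 := by have := pow_orderOf_eq_one a; rwa [ha] at this
    have h2 : (a ^ q) v = (⇑a)^[q] v := by rw [LinearEquiv.coe_pow]
    rw [h1] at h2; exact h2.symm
  -- a (a v) = v → a v = v
  have hav : ∀ v : V, a (a v) = v → a v = v := by
    intro v h2
    have hk : 2 * ((q + 1) / 2) = q + 1 := by omega
    have h2v : (⇑a)^[2] v = v := by simpa [Function.iterate_succ_apply'] using h2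
    have hiter : (⇑a)^[2 * ((q + 1) / 2)] v = v := by
      rw [Function.iterate_mul]
      exact Function.iterate_fixed h2v _
    rw [hk] at hiter
    have : (⇑a)^[q + 1] v = a v := by
      rw [Function.iterate_succ_apply', haq v]
    rw [this] at hiter; exact hiter
  -- norm map
  set A : V →ₗ[ZMod 2] V := (a : V →ₗ[ZMod 2] V) with hAdef
  set N : V →ₗ[ZMod 2] V := ∑ i ∈ Finset.range q, A ^ i with hNdef
  have hApow : ∀ (n : ℕ) (v : V), (A ^ n) v = (⇑a)^[n] v := by
    intro n v
    rw [Module.End.pow_apply]; rfl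
  have hAq : A ^ q = 1 := by
    ext v; rw [hApow]; exact haq v
  have hNg : N * g = 0 := by
    have h1 : N * g = ∑ i ∈ Finset.range q, (A ^ (i + 1) - A ^ i) := by
      rw [hNdef, Finset.sum_mul]
      refine Finset.sum_congr rfl fun i _ => ?_
      rw [hgdef, hAdef, mul_sub, ← Module.End.one_eq_id, mul_one, ← pow_succ]
    rw [h1, Finset.sum_range_sub (fun i => A ^ i), hAq, pow_zero, sub_self]
  have hNfix : ∀ v : V, a v = v → N v = v := by
    intro v hv
    have h1 : N v = ∑ i ∈ Finset.range q, (A ^ i) v := by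
      rw [hNdef]; exact LinearMap.sum_apply _ _ _
    rw [h1]
    have heach : ∀ i ∈ Finset.range q, (A ^ i) v = v := by
      intro i _; rw [hApow]; exact Function.iterate_fixed hv i
    rw [Finset.sum_congr rfl heach, Finset.sum_const, Finset.card_range]
    rw [← Nat.cast_smul_eq_nsmul (ZMod 2) q v]
    have hcast : ((q : ℕ) : ZMod 2) = 1 := by
      rw [← ZMod.natCast_mod q 2, hqodd, Nat.cast_one]
    rw [hcast, one_smul]
  -- ker g ⊓ range g = 0 pointwise
  have hKerW : ∀ v : V, a v = v → v ∈ LinearMap.range g → v = 0 := by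
    rintro v hv ⟨u, rfl⟩
    have h1 : N (g u) = g u := hNfix _ hv
    have h2 : N (g u) = 0 := by
      have := LinearMap.congr_fun hNg u
      simpa using this
    rw [h2] at h1; exact h1.symm
  -- range g is a-stable
  have hWa : ∀ v : V, v ∈ LinearMap.range g → a v ∈ LinearMap.range g := by
    rintro _ ⟨u, rfl⟩
    exact ⟨a u, by rw [hg, hg, map_sub]⟩
  -- range f ≤ ker f
  have hrk : LinearMap.range f ≤ LinearMap.ker f := by
    rintro _ ⟨u, rfl⟩
    rw [LinearMap.mem_ker, hf, hf, map_sub, hx1, hss u (x u), sub_self]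
  have hinf : LinearMap.ker f ⊓ LinearMap.range f = LinearMap.range f :=
    inf_eq_right.2 hrk
  rw [hinf]
  -- quotient dimension
  have hquot : finrank (ZMod 2) (V ⧸ LinearMap.ker g)
      = finrank (ZMod 2) (LinearMap.range g) := by
    have e1 := Submodule.finrank_quotient_add_finrank (LinearMap.ker g)
    have e2 := LinearMap.finrank_range_add_finrank_ker g
    omega
  rw [hquot]
  set W := LinearMap.range g with hWdef
  set C := W ⊓ LinearMap.ker f with hCdef
  -- key: C ⊓ map a C = ⊥
  have hdisj : C ⊓ Submodule.map (a : V →ₗ[ZMod 2] V) C = ⊥ := by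
    rw [eq_bot_iff]
    rintro u ⟨huC, v, hvC, rfl⟩
    simp only [SetLike.mem_coe, hCdef, Submodule.mem_inf, LinearMap.mem_ker] at huC hvC
    obtain ⟨huW, huf⟩ := huC
    obtain ⟨hvW, hvf⟩ := hvC
    rw [hf, sub_eq_zero] at huf hvf
    have hcoe : (a : V →ₗ[ZMod 2] V) v = a v := rfl
    rw [hcoe] at huf ⊢
    rw [hxa, hvf] at huf
    have haav : a (a v) = v := by rw [← huf, haainv]
    have hv0 : v = 0 := hKerW v (hav v haav) hvW
    rw [hv0]
    simp
  have hsup : C ⊔ Submodule.map (a : V →ₗ[ZMod 2] V) C ≤ W := by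
    refine sup_le inf_le_left ?_
    rintro _ ⟨v, hvC, rfl⟩
    simp only [SetLike.mem_coe, hCdef, Submodule.mem_inf] at hvC
    exact hWa v hvC.1
  have hmapeq : finrank (ZMod 2) (Submodule.map (a : V →ₗ[ZMod 2] V) C)
      = finrank (ZMod 2) C := LinearEquiv.finrank_map_eq a C
  have hC2 : 2 * finrank (ZMod 2) C ≤ finrank (ZMod 2) W := by
    have e1 := Submodule.finrank_sup_add_finrank_inf_eq C
      (Submodule.map (a : V →ₗ[ZMod 2] V) C)
    rw [hdisj] at e1
    have e2 : finrank (ZMod 2) ↥(C ⊔ Submodule.map (a : V →ₗ[ZMod 2] V) C)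
        ≤ finrank (ZMod 2) W := Submodule.finrank_mono hsup
    simp only [finrank_bot] at e1
    omega
  -- restriction of f to W
  have e1 := LinearMap.finrank_range_add_finrank_ker (f.comp W.subtype)
  have e2 : finrank (ZMod 2) (LinearMap.ker (f.comp W.subtype)) = finrank (ZMod 2) C := by
    rw [LinearMap.ker_comp]
    rw [← Submodule.finrank_map_subtype_eq W (Submodule.comap W.subtype (LinearMap.ker f))]
    rw [Submodule.map_comap_subtype]
  have e3 : finrank (ZMod 2) (LinearMap.range (f.comp W.subtype))
      ≤ finrank (ZMod 2) (LinearMap.range f) :=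
    Submodule.finrank_mono (LinearMap.range_comp_le_range _ _)
  omega
end

section
/- Let p = 3, let V be a finite-dimensional 𝔽₃-vector space, and let a, b, x ∈ GL(V) generate a subgroup isomorphic to A₄, with ⟨a,b⟩ ≅ C₂ × C₂ and x of order 3 cyclically permuting a, b, ab by conjugation. If n denotes the common multiplicity of each of the three nontrivial characters of ⟨a,b⟩ in V, so that n = (1/3)·dim(V/C_V(⟨a,b⟩)), then dim(C_V(x) ∩ [x,V]) ≥ n = (1/3)·dim(V/C_V(⟨a,b⟩)). -/
open Module

/-- Let `V` be a finite-dimensional `𝔽₃`-vector space and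
`a, b, x ∈ GL(V)` generating a subgroup isomorphic to `A₄`, with `⟨a,b⟩ ≅ C₂ × C₂`
and `x` of order 3 permuting `a, b, ab` cyclically by conjugation.  Then
`dim(C_V(x) ∩ [x,V]) ≥ n = (1/3)·dim(V / C_V(⟨a,b⟩))`, where
`C_V(⟨a,b⟩) = C_V(a) ∩ C_V(b)`. -/
theorem jordan_blocks_ge_of_A4_action
    (V : Type*) [AddCommGroup V] [Module (ZMod 3) V] [FiniteDimensional (ZMod 3) V]
    (a b x : V ≃ₗ[ZMod 3] V)
    (ha : orderOf a = 2) (hb : orderOf b = 2) (hab : a * b = b * a) (hne : a ≠ b)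
    (hx : orderOf x = 3)
    (hxa : x * a * x⁻¹ = b) (hxb : x * b * x⁻¹ = a * b) :
    3 * finrank (ZMod 3)
        ↥(LinearMap.ker ((x : V →ₗ[ZMod 3] V) - LinearMap.id) ⊓
          LinearMap.range ((x : V →ₗ[ZMod 3] V) - LinearMap.id))
      ≥ finrank (ZMod 3)
          (V ⧸ (LinearMap.ker ((a : V →ₗ[ZMod 3] V) - LinearMap.id) ⊓
            LinearMap.ker ((b : V →ₗ[ZMod 3] V) - LinearMap.id))) := by
  -- characteristic 3
  have char3 : ∀ v : V, v + v + v = 0 := by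
    intro v
    have h := Nat.cast_smul_eq_nsmul (ZMod 3) 3 v
    rw [show ((3:ℕ):ZMod 3) = 0 by decide, zero_smul,
      show (3:ℕ) • v = v + v + v by abel] at h
    exact h.symm
  -- group identities
  have ha1 : a * a = 1 := by rw [← sq, ← ha]; exact pow_orderOf_eq_one a
  have hb1 : b * b = 1 := by rw [← sq, ← hb]; exact pow_orderOf_eq_one b
  have hx1 : x * x * x = 1 := by
    have := pow_orderOf_eq_one x
    rwa [hx, pow_succ, pow_succ, pow_one] at this
  have hxa' : x * a = b * x := by
    have := congrArg (· * x) hxa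
    simpa [mul_assoc] using this
  have hxb' : x * b = a * b * x := by
    have := congrArg (· * x) hxb
    simpa [mul_assoc] using this
  have hax : a * x = x * (a * b) := by
    rw [← mul_assoc, hxa', mul_assoc, hxb', ← mul_assoc, ← mul_assoc, ← hab,
      mul_assoc a b b, hb1, mul_one]
  have haxi : a * x⁻¹ = x⁻¹ * b := by
    have h1 : x⁻¹ * (x * a * x⁻¹) = x⁻¹ * b := congrArg (x⁻¹ * ·) hxa
    calc a * x⁻¹ = x⁻¹ * (x * a * x⁻¹) := by group
    _ = x⁻¹ * b := h1
  have hbxi : b * x⁻¹ = x⁻¹ * (a * b) := by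
    have h1 : x⁻¹ * (x * b * x⁻¹) = x⁻¹ * (a * b) := congrArg (x⁻¹ * ·) hxb
    calc b * x⁻¹ = x⁻¹ * (x * b * x⁻¹) := by group
    _ = x⁻¹ * (a * b) := h1
  -- pointwise identities
  have hA : ∀ v : V, a (a v) = v := fun v => DFunLike.congr_fun ha1 v
  have hB : ∀ v : V, b (b v) = v := fun v => DFunLike.congr_fun hb1 v
  have hBA : ∀ v : V, b (a v) = a (b v) := fun v => DFunLike.congr_fun hab.symm v
  have hX3 : ∀ v : V, x (x (x v)) = v := fun v => DFunLike.congr_fun hx1 v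
  have hBX : ∀ v : V, b (x v) = x (a v) := fun v => (DFunLike.congr_fun hxa' v).symm
  have hAX : ∀ v : V, a (x v) = x (a (b v)) := fun v => DFunLike.congr_fun hax v
  have hAXi : ∀ v : V, a (x⁻¹ v) = x⁻¹ (b v) := fun v => DFunLike.congr_fun haxi v
  have hBXi : ∀ v : V, b (x⁻¹ v) = x⁻¹ (a (b v)) := fun v => DFunLike.congr_fun hbxi v
  -- submodules
  set C : Submodule (ZMod 3) V :=
    LinearMap.ker ((a : V →ₗ[ZMod 3] V) - LinearMap.id) ⊓
      LinearMap.ker ((b : V →ₗ[ZMod 3] V) - LinearMap.id) with hC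
  set K : Submodule (ZMod 3) V :=
    LinearMap.ker ((x : V →ₗ[ZMod 3] V) - LinearMap.id) ⊓
      LinearMap.range ((x : V →ₗ[ZMod 3] V) - LinearMap.id) with hK
  set U1 : Submodule (ZMod 3) V :=
    LinearMap.ker ((a : V →ₗ[ZMod 3] V) - LinearMap.id) ⊓
      LinearMap.ker ((b : V →ₗ[ZMod 3] V) + LinearMap.id) with hU1
  set U2 : Submodule (ZMod 3) V :=
    LinearMap.ker ((a : V →ₗ[ZMod 3] V) + LinearMap.id) ⊓
      LinearMap.ker ((b : V →ₗ[ZMod 3] V) - LinearMap.id) with hU2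
  set U3 : Submodule (ZMod 3) V :=
    LinearMap.ker ((a : V →ₗ[ZMod 3] V) + LinearMap.id) ⊓
      LinearMap.ker ((b : V →ₗ[ZMod 3] V) + LinearMap.id) with hU3
  have memC : ∀ v : V, v ∈ C ↔ a v = v ∧ b v = v := by
    intro v
    simp [hC, LinearMap.mem_ker, sub_eq_zero, Submodule.mem_inf]
  have memU1 : ∀ v : V, v ∈ U1 ↔ a v = v ∧ b v = -v := by
    intro v
    simp [hU1, LinearMap.mem_ker, sub_eq_zero, add_eq_zero_iff_eq_neg, Submodule.mem_inf]
  have memU2 : ∀ v : V, v ∈ U2 ↔ a v = -v ∧ b v = v := by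
    intro v
    simp [hU2, LinearMap.mem_ker, sub_eq_zero, add_eq_zero_iff_eq_neg, Submodule.mem_inf]
  have memU3 : ∀ v : V, v ∈ U3 ↔ a v = -v ∧ b v = -v := by
    intro v
    simp [hU3, LinearMap.mem_ker, sub_eq_zero, add_eq_zero_iff_eq_neg, Submodule.mem_inf]
  -- spanning
  have hspan : C ⊔ U1 ⊔ U2 ⊔ U3 = ⊤ := by
    rw [eq_top_iff]
    intro v _
    have h0 : v + a v + b v + a (b v) ∈ C := by
      rw [memC]
      constructor
      · simp only [map_add, hA]; abel
      · simp only [map_add, hBA, hB]; abel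
    have h1 : v + a v - b v - a (b v) ∈ U1 := by
      rw [memU1]
      constructor
      · simp only [map_add, map_sub, hA]; abel
      · simp only [map_add, map_sub, hBA, hB]; abel
    have h2 : v - a v + b v - a (b v) ∈ U2 := by
      rw [memU2]
      constructor
      · simp only [map_add, map_sub, hA]; abel
      · simp only [map_add, map_sub, hBA, hB]; abel
    have h3 : v - a v - b v + a (b v) ∈ U3 := by
      rw [memU3]
      constructor
      · simp only [map_add, map_sub, hA]; abel
      · simp only [map_add, map_sub, hBA, hB]; abel
    have hv : v = (v + a v + b v + a (b v)) + (v + a v - b v - a (b v))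
        + (v - a v + b v - a (b v)) + (v - a v - b v + a (b v)) := by
      have h := char3 v
      calc v = v + (v + v + v) := by rw [h, add_zero]
      _ = _ := by abel
    rw [hv]
    exact add_mem (add_mem (add_mem
      (Submodule.mem_sup_left (Submodule.mem_sup_left (Submodule.mem_sup_left h0)))
      (Submodule.mem_sup_left (Submodule.mem_sup_left (Submodule.mem_sup_right h1))))
      (Submodule.mem_sup_left (Submodule.mem_sup_right h2)))
      (Submodule.mem_sup_right h3)
  have sup_le : ∀ s t : Submodule (ZMod 3) V,
      finrank (ZMod 3) ↥(s ⊔ t) ≤ finrank (ZMod 3) s + finrank (ZMod 3) t := by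
    intro s t
    have := Submodule.finrank_sup_add_finrank_inf_eq s t
    omega
  have hdim : finrank (ZMod 3) V ≤ finrank (ZMod 3) C + finrank (ZMod 3) U1
      + finrank (ZMod 3) U2 + finrank (ZMod 3) U3 := by
    calc finrank (ZMod 3) V = finrank (ZMod 3) ↥(C ⊔ U1 ⊔ U2 ⊔ U3) := by
          rw [hspan, finrank_top]
    _ ≤ finrank (ZMod 3) ↥(C ⊔ U1 ⊔ U2) + finrank (ZMod 3) U3 := sup_le _ _
    _ ≤ finrank (ZMod 3) ↥(C ⊔ U1) + finrank (ZMod 3) U2 + finrank (ZMod 3) U3 := by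
          have := sup_le (C ⊔ U1) U2; omega
    _ ≤ _ := by have := sup_le C U1; omega
  -- dim U2 ≤ dim U1 via x⁻¹
  have hd2 : finrank (ZMod 3) U2 ≤ finrank (ZMod 3) U1 := by
    have hmap : Submodule.map (↑(x⁻¹) : V →ₗ[ZMod 3] V) U2 ≤ U1 := by
      rintro _ ⟨w, hw, rfl⟩
      have hw := (memU2 w).mp hw
      rw [memU1]
      constructor
      · show a (x⁻¹ w) = x⁻¹ w
        rw [hAXi, hw.2]
      · show b (x⁻¹ w) = -(x⁻¹ w)
        rw [hBXi, hw.2, hw.1, map_neg]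
    calc finrank (ZMod 3) U2
        = finrank (ZMod 3) ↥(Submodule.map (↑(x⁻¹) : V →ₗ[ZMod 3] V) U2) :=
          (LinearEquiv.finrank_map_eq x⁻¹ U2).symm
    _ ≤ finrank (ZMod 3) U1 := Submodule.finrank_mono hmap
  -- dim U3 ≤ dim U1 via x
  have hd3 : finrank (ZMod 3) U3 ≤ finrank (ZMod 3) U1 := by
    have hmap : Submodule.map (x : V →ₗ[ZMod 3] V) U3 ≤ U1 := by
      rintro _ ⟨w, hw, rfl⟩
      have hw := (memU3 w).mp hw
      rw [memU1]
      constructor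
      · show a (x w) = x w
        rw [hAX, hw.2, map_neg, hw.1, neg_neg]
      · show b (x w) = -(x w)
        rw [hBX, hw.1, map_neg]
    calc finrank (ZMod 3) U3
        = finrank (ZMod 3) ↥(Submodule.map (x : V →ₗ[ZMod 3] V) U3) :=
          (LinearEquiv.finrank_map_eq x U3).symm
    _ ≤ finrank (ZMod 3) U1 := Submodule.finrank_mono hmap
  -- the norm map N = 1 + x + x²
  set N : V →ₗ[ZMod 3] V :=
    LinearMap.id + (x : V →ₗ[ZMod 3] V) + (x : V →ₗ[ZMod 3] V) ∘ₗ (x : V →ₗ[ZMod 3] V)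
    with hN
  have hNapp : ∀ v : V, N v = v + x v + x (x v) := by
    intro v; simp [hN]
  set f : U1 →ₗ[ZMod 3] V := N.comp U1.subtype with hf
  have hfapp : ∀ u : U1, f u = (u : V) + x u + x (x u) := by
    intro u; simp [hf, hNapp]
  have hinj : Function.Injective f := by
    rw [injective_iff_map_eq_zero]
    intro u hu
    rw [hfapp] at hu
    obtain ⟨hau, hbu⟩ := (memU1 (u : V)).mp u.2
    have e2 : (u : V) - x u - x (x u) = 0 := by
      have := congrArg a hu
      simp only [map_add, map_zero, hAX, hBX, hau, hbu, map_neg] at this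
      calc (u : V) - x u - x (x u) = (u : V) + -(x u) + -(x (x u)) := by abel
      _ = 0 := this
    have h2 : (u : V) + (u : V) = 0 := by
      calc (u : V) + (u : V)
          = ((u : V) + x u + x (x u)) + ((u : V) - x u - x (x u)) := by abel
      _ = 0 := by rw [hu, e2, add_zero]
    have h3 := char3 (u : V)
    have : (u : V) = 0 := by
      calc (u : V) = ((u : V) + (u : V) + (u : V)) - ((u : V) + (u : V)) := by abel
      _ = 0 := by rw [h3, h2, sub_zero]
    exact Subtype.ext this
  have hrange : LinearMap.range f ≤ K := by
    rintro _ ⟨u, rfl⟩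
    obtain ⟨hau, hbu⟩ := (memU1 (u : V)).mp u.2
    rw [hK, Submodule.mem_inf]
    constructor
    · rw [LinearMap.mem_ker]
      have : x (f u) = f u := by
        rw [hfapp, map_add, map_add, hX3]
        abel
      simp only [LinearMap.sub_apply, LinearMap.id_apply, LinearEquiv.coe_coe]
      rw [this, sub_self]
    · rw [LinearMap.mem_range]
      refine ⟨x (u : V) - (u : V), ?_⟩
      simp only [LinearMap.sub_apply, LinearMap.id_apply, LinearEquiv.coe_coe, map_sub]
      rw [hfapp]
      have h := char3 (x (u : V))
      calc x (x (u : V)) - x (u : V) - (x (u : V) - (u : V))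
          = (u : V) + x (u : V) + x (x (u : V)) - (x (u : V) + x (u : V) + x (u : V)) := by
            abel
      _ = (u : V) + x (u : V) + x (x (u : V)) := by rw [h, sub_zero]
  have hd1 : finrank (ZMod 3) U1 ≤ finrank (ZMod 3) K := by
    calc finrank (ZMod 3) U1 = finrank (ZMod 3) (LinearMap.range f) :=
          (LinearMap.finrank_range_of_inj hinj).symm
    _ ≤ finrank (ZMod 3) K := Submodule.finrank_mono hrange
  have hq := Submodule.finrank_quotient_add_finrank C
  omega
end
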